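/- arXiv:2309.10887 — 3 statements merged into one kernel-verified Lean document; each statement's English description precedes it below -/
import Mathlib

section
/- For M a positive integer and θ ∈ [0, π/2] with sin(2θ) ≠ 0, define p_s(θ) = 1/2 - sin(4Mθ)/(4M·sin(2θ)). If sin(θ) ∈ [√ε, 1/√2] and M ≥ 2/√ε, then p_s(θ) ≥ 1/4. -/
/-!
Since `sin θ ≤ 1/√2`, the angle is at most `π/4`, so `cos θ ≥ 1/2` and `sin (2θ) = 2 sin θ cos θ ≥ sin θ ≥ √ε`.
With `M ≥ 2/√ε` this gives `4 M sin (2θ) ≥ 8`, and `|sin (4Mθ)| ≤ 1` then bounds the correction term by `1/4`.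
-/

open Real

lemma Real.le_pi_div_four_of_sin_le {θ : ℝ} (hθ0 : -(π / 2) ≤ θ) (hθ1 : θ ≤ π / 2)
    (h : sin θ ≤ 1 / √2) : θ ≤ π / 4 := by
  have hπ := pi_pos
  rw [← strictMonoOn_sin.le_iff_le ⟨hθ0, hθ1⟩ ⟨by linarith, by linarith⟩, sin_pi_div_four]
  calc sin θ ≤ 1 / √2 := h
    _ = √2 / 2 := by field_simp; rw [sq_sqrt zero_le_two]

lemma Real.sin_le_sin_two_mul {θ : ℝ} (hθ0 : 0 ≤ θ) (hθ1 : θ ≤ π / 3) : sin θ ≤ sin (2 * θ) := by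
  have hπ := pi_pos
  have hsin : 0 ≤ sin θ := sin_nonneg_of_nonneg_of_le_pi hθ0 (by linarith)
  have hcos : 1 / 2 ≤ cos θ := cos_pi_div_three ▸ cos_le_cos_of_nonneg_of_le_pi hθ0 (by linarith) hθ1
  rw [sin_two_mul]
  nlinarith

lemma Real.quarter_le_one_half_sub_sin_div (x : ℝ) {M s : ℝ} (h : 1 ≤ M * s) :
    1 / 2 - sin x / (4 * M * s) ≥ 1 / 4 := by
  have hD : 4 ≤ 4 * M * s := by linarith
  have : sin x / (4 * M * s) ≤ 1 / 4 :=
    calc sin x / (4 * M * s) ≤ 1 / (4 * M * s) :=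
          div_le_div_of_nonneg_right (sin_le_one x) (by linarith)
      _ ≤ 1 / 4 := one_div_le_one_div_of_le (by norm_num) hD
  linarith

theorem grover_success_prob_small_angle_general
    (ε : ℝ) (hε : 0 < ε) (M : ℕ) (θ : ℝ)
    (hθ0 : 0 ≤ θ) (hθ1 : θ ≤ π / 2)
    (hlow : Real.sqrt ε ≤ Real.sin θ)
    (hhigh : Real.sin θ ≤ 1 / Real.sqrt 2)
    (hMε : (M : ℝ) ≥ 2 / Real.sqrt ε) :
    1 / 2 - Real.sin (4 * M * θ) / (4 * M * Real.sin (2 * θ)) ≥ 1 / 4 := by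
  have hπ := pi_pos
  have hθ : θ ≤ π / 4 := le_pi_div_four_of_sin_le (by linarith) hθ1 hhigh
  have hsin : √ε ≤ sin (2 * θ) := hlow.trans (sin_le_sin_two_mul hθ0 (by linarith))
  have hMε' : 2 ≤ M * √ε := (div_le_iff₀ (sqrt_pos.mpr hε)).mp hMε
  apply quarter_le_one_half_sub_sin_div
  calc (1 : ℝ) ≤ M * √ε := by linarith
    _ ≤ M * sin (2 * θ) := mul_le_mul_of_nonneg_left hsin M.cast_nonneg

theorem grover_success_prob_small_angle
    (ε : ℝ) (hε : 0 < ε) (M : ℕ) (hM : 1 ≤ M) (θ : ℝ)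
    (hθ0 : 0 ≤ θ) (hθ1 : θ ≤ π / 2)
    (hsin2 : Real.sin (2 * θ) ≠ 0)
    (hlow : Real.sqrt ε ≤ Real.sin θ)
    (hhigh : Real.sin θ ≤ 1 / Real.sqrt 2)
    (hMε : (M : ℝ) ≥ 2 / Real.sqrt ε) :
    1 / 2 - Real.sin (4 * M * θ) / (4 * M * Real.sin (2 * θ)) ≥ 1 / 4 :=
  grover_success_prob_small_angle_general ε hε M θ hθ0 hθ1 hlow hhigh hMε
end

section
/- Let M ≥ 1 be an integer and θ ∈ [π/4, (1/2 - 1/(4M))π]. Then 1/2 - sin(4Mθ)/(4M·sin(2θ)) ≥ 1/2 - 4/π² > 0.09. -/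
open Real

/-! Since `θ` stays at least `π/(4M)` away from `π/2`, Jordan's inequality gives
`4M sin (2θ) ≥ 4`, and with `sin (4Mθ) ≤ 1` the ratio is at most `1/4 ≤ 4/π²`. -/

/-- Jordan's inequality `sin x ≥ 2x/π` at `x = π - 2θ ≥ π/(2M)`. -/
theorem one_le_mul_sin_two_mul {M θ : ℝ} (hM : 0 < M) (h1 : π / 4 ≤ θ)
    (h2 : θ ≤ (1 / 2 - 1 / (4 * M)) * π) : 1 ≤ M * sin (2 * θ) := by
  have h2' : (1 / 2 - 1 / (4 * M)) * π = π / 2 - π / (2 * M) / 2 := by field_simp; ring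
  have hgap : π / (2 * M) ≤ π - 2 * θ := by linarith
  have hgap_pos : 0 < π / (2 * M) := by positivity
  have hjordan := mul_le_sin (x := π - 2 * θ) (by linarith) (by linarith)
  rw [sin_pi_sub] at hjordan
  calc 1 = M * (2 / π * (π / (2 * M))) := by field_simp
    _ ≤ M * (2 / π * (π - 2 * θ)) := by gcongr
    _ ≤ M * sin (2 * θ) := by gcongr

theorem sin_div_four_mul_le_one_div_four (x : ℝ) {a : ℝ} (ha : 1 ≤ a) :
    sin x / (4 * a) ≤ 1 / 4 := by
  rw [div_le_iff₀ (by positivity)]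
  nlinarith [sin_le_one x]

theorem one_div_four_le_four_div_pi_sq : (1 : ℝ) / 4 ≤ 4 / π ^ 2 := by
  rw [div_le_div_iff₀ (by norm_num) (by positivity)]
  nlinarith [pi_pos, pi_le_four]

theorem four_div_pi_sq_lt : 4 / π ^ 2 < 0.41 := by
  rw [div_lt_iff₀ (by positivity)]
  nlinarith [pi_gt_d2]

theorem grover_success_prob_mid_angle
    (M : ℕ) (hM : 1 ≤ M) (θ : ℝ)
    (h1 : π / 4 ≤ θ) (h2 : θ ≤ (1 / 2 - 1 / (4 * M)) * π) :
    1 / 2 - Real.sin (4 * M * θ) / (4 * M * Real.sin (2 * θ)) ≥ 1 / 2 - 4 / π ^ 2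
      ∧ (1 : ℝ) / 2 - 4 / π ^ 2 > 0.09 := by
  have hMθ : 1 ≤ (M : ℝ) * sin (2 * θ) :=
    one_le_mul_sin_two_mul (by exact_mod_cast hM) h1 h2
  have hquarter := sin_div_four_mul_le_one_div_four (4 * M * θ) hMθ
  rw [← mul_assoc] at hquarter
  constructor
  · linarith [one_div_four_le_four_div_pi_sq]
  · linarith [four_div_pi_sq_lt]
end

section
/- Let C be a concept class on a finite set X (a set of functions X → {0,1}) with VC dimension d. Then 2^d ≤ |C| ≤ |X|^d + 1. -/
/-!
Identify each concept `c` with the set `{x | c x = true}`; this is injective and turns `C` into a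
family of subsets of `X` with the same shattered sets. A shattered set `Y` of size `d` gives
`2 ^ d` concepts with pairwise different traces on `Y`. Conversely, by Pajor's form of the
Sauer–Shelah lemma `C` has at most as many members as it shatters sets, and these all have size
at most `d`, so `|C| ≤ ∑_{k ≤ d} (n choose k) ≤ n ^ d + 1` with `n = |X|`.
-/

open Finset

/-- `C` shatters `Y` if every labelling of `Y` is realised by some concept in `C`. -/
def Shatters {X : Type*} [DecidableEq X] (C : Finset (X → Bool)) (Y : Finset X) : Prop :=
  ∀ ℓ : X → Bool, ∃ c ∈ C, ∀ y ∈ Y, c y = ℓ y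

namespace Nat

lemma pow_add_choose_succ_le_pow_succ {n d : ℕ} (hd : 1 ≤ d) :
    n ^ d + n.choose (d + 1) ≤ n ^ (d + 1) := by
  rcases n with _ | m
  · simp [Nat.zero_pow (by omega : 0 < d)]
  · calc (m + 1) ^ d + (m + 1).choose (d + 1)
        ≤ (m + 1) ^ d + (m + 1).choose (d + 1) * (d + 1) := by
          gcongr; exact Nat.le_mul_of_pos_right _ d.succ_pos
      _ = (m + 1) ^ d + (m + 1).choose d * (m + 1 - d) := by rw [Nat.choose_succ_right_eq]
      _ ≤ (m + 1) ^ d + (m + 1) ^ d * m := by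
          gcongr
          · exact Nat.choose_le_pow _ d
          · omega
      _ = (m + 1) ^ (d + 1) := by ring

lemma sum_Iic_choose_le_pow_add_one (n d : ℕ) : ∑ k ∈ Iic d, n.choose k ≤ n ^ d + 1 := by
  rcases Nat.eq_zero_or_pos d with rfl | hd
  · simp [← Nat.range_succ_eq_Iic]
  induction d, hd using Nat.le_induction with
  | base => simp [← Nat.range_succ_eq_Iic, sum_range_succ, Nat.add_comm]
  | succ d hd ih =>
    rw [← Nat.range_succ_eq_Iic, sum_range_succ, Nat.range_succ_eq_Iic]
    have := pow_add_choose_succ_le_pow_succ (n := n) hd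
    omega

end Nat

namespace Finset

variable {α : Type*} [DecidableEq α] {𝒜 : Finset (Finset α)} {s : Finset α}

lemma Shatters.two_pow_card_le_card (h : 𝒜.Shatters s) : 2 ^ #s ≤ #𝒜 := by
  rw [← card_powerset, ← shatters_iff.1 h]
  exact card_image_le

lemma card_le_card_pow_vcDim_add_one [Fintype α] (𝒜 : Finset (Finset α)) :
    #𝒜 ≤ Fintype.card α ^ 𝒜.vcDim + 1 :=
  calc #𝒜 ≤ #𝒜.shatterer := card_le_card_shatterer 𝒜
    _ ≤ ∑ k ∈ Iic 𝒜.vcDim, (Fintype.card α).choose k := card_shatterer_le_sum_vcDim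
    _ ≤ Fintype.card α ^ 𝒜.vcDim + 1 := Nat.sum_Iic_choose_le_pow_add_one _ _

end Finset

section ConceptClass

variable {X : Type*} [Fintype X] [DecidableEq X]

def trueSet (c : X → Bool) : Finset X := {x | c x}

omit [DecidableEq X] in
@[simp] lemma mem_trueSet {c : X → Bool} {x : X} : x ∈ trueSet c ↔ c x = true := by
  simp [trueSet]

omit [DecidableEq X] in
lemma trueSet_injective : Function.Injective (trueSet : (X → Bool) → Finset X) :=
  fun c c' h => funext fun x => Bool.eq_iff_iff.2 (by simpa using Finset.ext_iff.1 h x)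

lemma shatters_image_trueSet_iff {C : Finset (X → Bool)} {Y : Finset X} :
    (C.image trueSet).Shatters Y ↔ Shatters C Y := by
  constructor
  · intro h ℓ
    obtain ⟨_, hc, hY⟩ := h (filter_subset (ℓ · = true) Y)
    obtain ⟨c, hcC, rfl⟩ := mem_image.1 hc
    refine ⟨c, hcC, fun y hy => ?_⟩
    exact Bool.eq_iff_iff.2 (by simpa [hy] using Finset.ext_iff.1 hY y)
  · intro h t ht
    obtain ⟨c, hcC, hc⟩ := h (fun x => decide (x ∈ t))
    refine ⟨trueSet c, mem_image_of_mem _ hcC, ?_⟩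
    ext x
    by_cases hx : x ∈ Y
    · simp [hx, hc x hx]
    · simp [hx, mt (@ht x) hx]

lemma Shatters.two_pow_card_le_card {C : Finset (X → Bool)} {Y : Finset X}
    (h : Shatters C Y) : 2 ^ #Y ≤ #C :=
  (shatters_image_trueSet_iff.2 h).two_pow_card_le_card.trans card_image_le

end ConceptClass

theorem vc_card_bounds_general
    {X : Type*} [Fintype X] [DecidableEq X]
    (C : Finset (X → Bool)) (d : ℕ)
    (hshat : ∃ Y : Finset X, Y.card = d ∧ Shatters C Y)
    (hmax : ∀ Y : Finset X, Shatters C Y → Y.card ≤ d) :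
    2 ^ d ≤ C.card ∧ C.card ≤ (Fintype.card X) ^ d + 1 := by
  obtain ⟨Y, rfl, hY⟩ := hshat
  refine ⟨hY.two_pow_card_le_card, ?_⟩
  have hvc : (C.image trueSet).vcDim = #Y := le_antisymm
    (Finset.sup_le fun Z hZ => hmax Z (shatters_image_trueSet_iff.1 (mem_shatterer.1 hZ)))
    (shatters_image_trueSet_iff.2 hY).card_le_vcDim
  rw [← card_image_of_injective C trueSet_injective, ← hvc]
  exact card_le_card_pow_vcDim_add_one _

theorem vc_card_bounds
    {X : Type*} [Fintype X] [DecidableEq X]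
    (C : Finset (X → Bool)) (hC : C.Nonempty) (d : ℕ)
    (hshat : ∃ Y : Finset X, Y.card = d ∧ Shatters C Y)
    (hmax : ∀ Y : Finset X, Shatters C Y → Y.card ≤ d) :
    2 ^ d ≤ C.card ∧ C.card ≤ (Fintype.card X) ^ d + 1 :=
  vc_card_bounds_general C d hshat hmax
end
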